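/- Let B_{1,0}, B_{2,0} be elements of a unital associative \mathbb{C}(q)-algebra obtained from elements f_1, f_2, f_{31} satisfying f_1 f_2 - q f_2 f_1 = (q^{-1}-q) f_{31} and f_{31} f_1 - q f_1 f_{31} = (q^{-1}-q) f_2 via B_{i,0} = f_i/(q-q^{-1}). Then B_{1,0}^2 B_{2,0} - [2]\, B_{1,0} B_{2,0} B_{1,0} + B_{2,0} B_{1,0}^2 = -q^{-1} B_{2,0}, where [2] = q + q^{-1}. -/

import Mathlib

/-- The formal variable `q`, as a generator of the field ℂ(q). -/
noncomputable def qgen : RatFunc ℂ := RatFunc.X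

/-! With `X = [f₁, f₂]_q = (q⁻¹ - q) f₃₁`, the Serre expression in `f₁, f₂` is the nested
`q`-commutator `[f₁, X]_{q⁻¹}`, and `[f₁, f₃₁]_{q⁻¹} = -q⁻¹ [f₃₁, f₁]_q = -q⁻¹ (q⁻¹ - q) f₂`.
Hence `f₁² f₂ - [2] f₁ f₂ f₁ + f₂ f₁² = -q⁻¹ (q - q⁻¹)² f₂`, and dividing each `fᵢ` by
`q - q⁻¹` turns the factor `(q - q⁻¹)²` into `(q - q⁻¹)⁻¹`. -/

section QCommutator

variable {R A : Type*} [Field R] [Ring A] [Algebra R A]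

def qCommutator (q : R) (a b : A) : A := a * b - q • (b * a)

theorem qCommutator_smul_left (q c : R) (a b : A) :
    qCommutator q (c • a) b = c • qCommutator q a b := by
  simp only [qCommutator, smul_mul_assoc, mul_smul_comm, smul_sub, smul_comm q c]

theorem qCommutator_smul_right (q c : R) (a b : A) :
    qCommutator q a (c • b) = c • qCommutator q a b := by
  simp only [qCommutator, smul_mul_assoc, mul_smul_comm, smul_sub, smul_comm q c]

theorem qCommutator_inv_eq_smul_qCommutator_swap {q : R} (hq : q ≠ 0) (a b : A) :
    qCommutator q⁻¹ a b = (-q⁻¹) • qCommutator q b a := by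
  simp only [qCommutator, smul_sub, smul_smul, neg_mul, inv_mul_cancel₀ hq, neg_smul, one_smul]
  abel

theorem qSerre_eq_qCommutator_qCommutator {q : R} (hq : q ≠ 0) (a b : A) :
    a * a * b - (q + q⁻¹) • (a * b * a) + b * (a * a)
      = qCommutator q⁻¹ a (qCommutator q a b) := by
  simp only [qCommutator, mul_sub, sub_mul, mul_smul_comm, smul_mul_assoc, smul_sub, smul_smul,
    inv_mul_cancel₀ hq, one_smul, add_smul, mul_assoc]
  abel

theorem qCommutator_qCommutator_of_relations {q : R} (hq : q ≠ 0) {f1 f2 f31 : A}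
    (h1 : qCommutator q f1 f2 = (q⁻¹ - q) • f31)
    (h2 : qCommutator q f31 f1 = (q⁻¹ - q) • f2) :
    qCommutator q⁻¹ f1 (qCommutator q f1 f2) = (-(q⁻¹ * (q - q⁻¹) ^ 2)) • f2 := by
  rw [h1, qCommutator_smul_right, qCommutator_inv_eq_smul_qCommutator_swap hq, h2, smul_smul,
    smul_smul]
  congr 1
  ring

end QCommutator

theorem inv_pow_three_mul_sq {K : Type*} [Field K] (s : K) : s⁻¹ ^ 3 * s ^ 2 = s⁻¹ := by
  rcases eq_or_ne s 0 with rfl | hs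
  · simp
  · field_simp

/-- If `f₁f₂ - q f₂f₁ = (q⁻¹-q) f₃₁` and `f₃₁f₁ - q f₁f₃₁ = (q⁻¹-q) f₂`, and
`B_{i,0} = f_i / (q - q⁻¹)`, then
`B₁₀² B₂₀ - [2] B₁₀ B₂₀ B₁₀ + B₂₀ B₁₀² = -q⁻¹ B₂₀`, where `[2] = q + q⁻¹`. -/
theorem serre_zero_modes {A : Type*} [Ring A] [Algebra (RatFunc ℂ) A]
    (f1 f2 f31 B1 B2 : A)
    (h1 : f1 * f2 - qgen • (f2 * f1) = (qgen⁻¹ - qgen) • f31)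
    (h2 : f31 * f1 - qgen • (f1 * f31) = (qgen⁻¹ - qgen) • f2)
    (hB1 : B1 = (qgen - qgen⁻¹)⁻¹ • f1)
    (hB2 : B2 = (qgen - qgen⁻¹)⁻¹ • f2) :
    B1 * B1 * B2 - (qgen + qgen⁻¹) • (B1 * B2 * B1) + B2 * (B1 * B1)
      = (-qgen⁻¹) • B2 := by
  have hq : qgen ≠ 0 := RatFunc.X_ne_zero
  subst hB1 hB2
  simp only [qSerre_eq_qCommutator_qCommutator hq, qCommutator_smul_left, qCommutator_smul_right,
    qCommutator_qCommutator_of_relations hq h1 h2, smul_smul]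
  congr 1
  linear_combination (-qgen⁻¹) * inv_pow_three_mul_sq (qgen - qgen⁻¹)
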